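/- arXiv:0911.4361 — 4 statements merged into one kernel-verified Lean document; each statement's English description precedes it below -/
import Mathlib

section
/- There exist constants c > 0 and n₀ such that for all n ≥ n₀, L_n ≥ c·n^{3/2}. -/
/-! `‖x‖_D ≥ ‖x‖ / M` for the sup norm once `D ⊆ closedBall 0 M`, so it suffices to bound the
sup-norm perimeter of a convex lattice `n`-gon. Its vertices are in convex position, and a planar
set in convex position contains at most two translates of a nonzero segment; hence every lattice
vector occurs at most twice as an edge vector. As only `(2R + 1)²` lattice vectors have norm at
most `R`, for `R = √n / 6` at least `n / 2` edges are longer than `R`, and the perimeter is at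
least `n √n / 12`. The parabola points `(i, i²)` show that convex lattice `n`-gons exist. -/

open Real Set
open scoped Pointwise

/-- Cross product of two planar vectors. -/
def cross (u v : ℝ × ℝ) : ℝ := u.1 * v.2 - u.2 * v.1

/-- `z 0, …, z (n-1)` are the vertices, in anticlockwise order, of a convex polygon. -/
def IsConvexPolygon (n : ℕ) (z : ℕ → ℝ × ℝ) : Prop :=
  (∀ i < n, z i ∉ convexHull ℝ (z '' {j | j < n ∧ j ≠ i})) ∧
  (∀ i < n, 0 < cross (z ((i + 1) % n) - z (i % n)) (z ((i + 2) % n) - z ((i + 1) % n)))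

/-- The (possibly asymmetric) norm determined by a convex body `D` with `0 ∈ int D`. -/
noncomputable def normD (D : Set (ℝ × ℝ)) (x : ℝ × ℝ) : ℝ :=
  sInf {t : ℝ | 0 ≤ t ∧ x ∈ t • D}

/-- The `D`-perimeter of the polygon with vertices `z 0, …, z (n-1)`. -/
noncomputable def perD (D : Set (ℝ × ℝ)) (n : ℕ) (z : ℕ → ℝ × ℝ) : ℝ :=
  ∑ i ∈ Finset.range n, normD D (z ((i + 1) % n) - z i)

def IsLatticePt (p : ℝ × ℝ) : Prop := ∃ a b : ℤ, p = ((a : ℝ), (b : ℝ))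

/-- The minimal `D`-perimeter of a convex lattice `n`-gon. -/
noncomputable def Ln (D : Set (ℝ × ℝ)) (n : ℕ) : ℝ :=
  sInf {p | ∃ z : ℕ → ℝ × ℝ, (∀ i < n, IsLatticePt (z i)) ∧ IsConvexPolygon n z ∧
    p = perD D n z}

open scoped Finset

section ConvexPosition

variable {E : Type*} [AddCommGroup E] [Module ℝ E]

lemma add_smul_mem_segment (a v : E) {r s t : ℝ} (hrs : r ≤ s) (hst : s ≤ t) :
    a + s • v ∈ segment ℝ (a + r • v) (a + t • v) := by
  rw [mem_segment_translate]
  have hs : s ∈ segment ℝ r t := by rw [segment_eq_Icc (hrs.trans hst)]; exact ⟨hrs, hst⟩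
  have := mem_image_of_mem (LinearMap.toSpanSingleton ℝ E v).toAffineMap hs
  rwa [image_segment] at this

lemma notMem_convexHull_of_forall_lt (ℓ : E →ₗ[ℝ] ℝ) {x : E} {t : Set E}
    (h : ∀ y ∈ t, ℓ y < ℓ x) : x ∉ convexHull ℝ t := fun hx =>
  lt_irrefl (ℓ x) (convexHull_min (t := {y | ℓ y < ℓ x}) h (convex_halfSpace_lt ℓ.isLinear _) hx)

variable {s : Set E}

lemma ConvexIndependent.eq_zero_of_add_mem_of_add_add_mem
    (hs : ConvexIndependent ℝ ((↑) : s → E)) {x v : E} (hx : x ∈ s) (hxv : x + v ∈ s)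
    (hxvv : x + v + v ∈ s) : v = 0 := by
  by_contra hv
  rw [convexIndependent_set_iff_notMem_convexHull_sdiff] at hs
  have hseg := add_smul_mem_segment x v zero_le_one one_le_two
  rw [zero_smul, add_zero, one_smul, two_smul, ← add_assoc] at hseg
  exact hs _ hxv (segment_subset_convexHull (mem_sdiff_of_mem hx (by simpa [eq_comm] using hv))
    (mem_sdiff_of_mem hxvv (by simpa using hv)) hseg)

/-- Depending on the sign of `t`, either `b ∈ [p, b + v]` or `b + v ∈ [b, p + v]`. -/
lemma ConvexIndependent.add_notMem_convexHull_sdiff_pair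
    (hs : ConvexIndependent ℝ ((↑) : s → E)) {b p v : E} (hv : v ≠ 0) (hb : b ∈ s)
    (hbv : b + v ∈ s) (hp : p ∈ convexHull ℝ (s \ {b, b + v})) (t : ℝ) (hpb : b = p + t • v) :
    p + v ∉ convexHull ℝ (s \ {b, b + v}) := by
  intro hpv
  rw [convexIndependent_set_iff_notMem_convexHull_sdiff] at hs
  have hbbv : b ≠ b + v := by simpa [eq_comm] using hv
  rcases le_or_gt 0 t with ht | ht
  · refine hs b hb ((convex_convexHull ℝ _).segment_subset
      (convexHull_mono (sdiff_subset_sdiff_right (by simp)) hp)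
      (subset_convexHull ℝ _ (mem_sdiff_of_mem hbv (by simpa using hbbv.symm))) ?_)
    have hseg := add_smul_mem_segment p v ht (le_add_of_nonneg_right zero_le_one)
    rwa [zero_smul, add_zero, add_smul, one_smul, ← add_assoc, ← hpb] at hseg
  · refine hs (b + v) hbv ((convex_convexHull ℝ _).segment_subset
      (subset_convexHull ℝ _ (mem_sdiff_of_mem hb (by simpa using hbbv)))
      (convexHull_mono (sdiff_subset_sdiff_right (by simp)) hpv) ?_)
    have hseg := add_smul_mem_segment p v (le_add_of_nonneg_right zero_le_one : t ≤ t + 1)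
      (by linarith : t + 1 ≤ 1)
    rwa [one_smul, add_smul, one_smul, ← add_assoc, ← hpb] at hseg

end ConvexPosition

lemma exists_eq_smul_of_cross_eq_zero {v u : ℝ × ℝ} (hv : v ≠ 0) (h : cross v u = 0) :
    ∃ t : ℝ, u = t • v := by
  have hv2 : v.1 ^ 2 + v.2 ^ 2 ≠ 0 := by
    contrapose! hv
    ext <;> simp only [Prod.fst_zero, Prod.snd_zero] <;> nlinarith [sq_nonneg v.1, sq_nonneg v.2]
  simp only [cross] at h
  refine ⟨(v.1 * u.1 + v.2 * u.2) / (v.1 ^ 2 + v.2 ^ 2), Prod.ext ?_ ?_⟩ <;>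
    simp only [Prod.smul_fst, Prod.smul_snd, smul_eq_mul] <;>
    rw [div_mul_eq_mul_div, eq_div_iff hv2]
  · linear_combination (-v.2) * h
  · linear_combination v.1 * h

lemma exists_mem_segment_cross_eq {v a b c : ℝ × ℝ} (hab : cross v a ≤ cross v b)
    (hbc : cross v b ≤ cross v c) : ∃ p ∈ segment ℝ a c, cross v p = cross v b := by
  let ℓ : ℝ × ℝ →ₗ[ℝ] ℝ := v.1 • LinearMap.snd ℝ ℝ ℝ - v.2 • LinearMap.fst ℝ ℝ ℝ
  have hℓ : ∀ x, ℓ x = cross v x := fun x => by simp [ℓ, cross]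
  have hb : cross v b ∈ ℓ.toAffineMap '' segment ℝ a c := by
    rw [image_segment, LinearMap.coe_toAffineMap, hℓ, hℓ, segment_eq_Icc (hab.trans hbc)]
    exact ⟨hab, hbc⟩
  obtain ⟨p, hp, hpb⟩ := hb
  exact ⟨p, hp, (hℓ p).symm.trans hpb⟩

/-- Sort `a, b, c` by `cross v`, i.e. by the lines parallel to `v` through them. The middle line
meets `[a, c]` in some `p`, and `[p, p + v] ⊆ convexHull {a, c, a + v, c + v}` is a translate of
`[b, b + v]` on that line, which convex position forbids. -/
lemma ConvexIndependent.eq_zero_of_three_translates {s : Set (ℝ × ℝ)}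
    (hs : ConvexIndependent ℝ ((↑) : s → ℝ × ℝ)) {a b c v : ℝ × ℝ} (hab : a ≠ b) (hac : a ≠ c)
    (hbc : b ≠ c) (ha : a ∈ s) (hb : b ∈ s) (hc : c ∈ s) (hav : a + v ∈ s) (hbv : b + v ∈ s)
    (hcv : c + v ∈ s) : v = 0 := by
  by_contra hv
  wlog h₁ : cross v a ≤ cross v b generalizing a b c
  · exact this hab.symm hbc hac hb ha hc hbv hav hcv (le_of_not_ge h₁)
  wlog h₂ : cross v b ≤ cross v c generalizing a b c
  · rcases le_total (cross v a) (cross v c) with h | h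
    · exact this hac hab hbc.symm ha hc hb hav hcv hbv h (le_of_not_ge h₂)
    · exact this hac.symm hbc.symm hab hc ha hb hcv hav hbv h h₁
  have hK : ∀ x ∈ s, x + v ∈ s → x ≠ b →
      x ∈ s \ {b, b + v} ∧ x + v ∈ s \ {b, b + v} := by
    intro x hx hxv hxb
    have hxbv : x ≠ b + v := fun h =>
      hv (hs.eq_zero_of_add_mem_of_add_add_mem hb (h ▸ hx) (h ▸ hxv))
    have hxvb : x + v ≠ b := fun h => hv (hs.eq_zero_of_add_mem_of_add_add_mem hx hxv (h ▸ hbv))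
    exact ⟨⟨hx, by simp [hxb, hxbv]⟩, ⟨hxv, by simp [hxb, hxvb]⟩⟩
  obtain ⟨hKa, hKav⟩ := hK a ha hav hab
  obtain ⟨hKc, hKcv⟩ := hK c hc hcv hbc.symm
  obtain ⟨p, hp, hpb⟩ := exists_mem_segment_cross_eq h₁ h₂
  obtain ⟨t, ht⟩ := exists_eq_smul_of_cross_eq_zero hv (u := b - p) (by
    simp only [cross, Prod.fst_sub, Prod.snd_sub] at hpb ⊢
    linear_combination -hpb)
  refine hs.add_notMem_convexHull_sdiff_pair hv hb hbv (segment_subset_convexHull hKa hKc hp) t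
    (by rw [← ht, add_sub_cancel]) (segment_subset_convexHull hKav hKcv ?_)
  rwa [add_comm p, add_comm a, add_comm c, mem_segment_translate]

lemma IsLatticePt.sub {p q : ℝ × ℝ} (hp : IsLatticePt p) (hq : IsLatticePt q) :
    IsLatticePt (p - q) := by
  obtain ⟨a, b, rfl⟩ := hp
  obtain ⟨c, d, rfl⟩ := hq
  exact ⟨a - c, b - d, by push_cast; rfl⟩

namespace IsConvexPolygon

variable {n : ℕ} {z : ℕ → ℝ × ℝ}

lemma injOn (hz : IsConvexPolygon n z) : InjOn z {i | i < n} := by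
  intro i hi j hj hij
  by_contra hne
  exact hz.1 i hi (subset_convexHull ℝ _ ⟨j, ⟨hj, Ne.symm hne⟩, hij.symm⟩)

lemma convexIndependent (hz : IsConvexPolygon n z) :
    ConvexIndependent ℝ ((↑) : z '' {i | i < n} → ℝ × ℝ) := by
  rw [convexIndependent_set_iff_notMem_convexHull_sdiff]
  rintro _ ⟨i, hi, rfl⟩ h
  refine hz.1 i hi (convexHull_mono ?_ h)
  rintro _ ⟨⟨j, hj, rfl⟩, hji⟩
  exact ⟨j, ⟨hj, fun h => hji (h ▸ rfl)⟩, rfl⟩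

lemma edge_ne_zero (hz : IsConvexPolygon n z) {i : ℕ} (hi : i < n) :
    z ((i + 1) % n) - z i ≠ 0 := by
  intro h
  have h₂ := hz.2 i hi
  rw [Nat.mod_eq_of_lt hi, h] at h₂
  simp [cross] at h₂

lemma card_filter_edge_eq_le_two (hz : IsConvexPolygon n z) (w : ℝ × ℝ) :
    #{i ∈ Finset.range n | z ((i + 1) % n) - z i = w} ≤ 2 := by
  by_contra! h
  obtain ⟨i, j, k, hi, hj, hk, hij, hik, hjk⟩ := Finset.two_lt_card_iff.1 h
  simp only [Finset.mem_filter, Finset.mem_range] at hi hj hk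
  have hvert : ∀ l < n, z l ∈ z '' {i | i < n} := fun l hl => mem_image_of_mem z hl
  have hnext : ∀ l, l < n ∧ z ((l + 1) % n) - z l = w → z l + w ∈ z '' {i | i < n} := by
    rintro l ⟨hl, rfl⟩
    rw [add_sub_cancel]
    exact hvert _ (Nat.mod_lt _ (by omega))
  refine hz.edge_ne_zero hi.1 (hi.2.trans (hz.convexIndependent.eq_zero_of_three_translates
    (hz.injOn.ne hi.1 hj.1 hij) (hz.injOn.ne hi.1 hk.1 hik) (hz.injOn.ne hj.1 hk.1 hjk)
    (hvert i hi.1) (hvert j hj.1) (hvert k hk.1) (hnext i hi) (hnext j hj) (hnext k hk)))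

end IsConvexPolygon

section LatticeCounting

variable {ι : Type*} {s : Finset ι} {f : ι → ℝ × ℝ} {m : ℕ}

lemma card_filter_norm_le_le (hf : ∀ i ∈ s, IsLatticePt (f i))
    (hm : ∀ w, #{i ∈ s | f i = w} ≤ m) {R : ℝ} (hR : 0 ≤ R) :
    (#{i ∈ s | ‖f i‖ ≤ R} : ℝ) ≤ m * (2 * R + 1) ^ 2 := by
  classical
  set N := ⌊R⌋
  set B : Finset (ℤ × ℤ) := Finset.Icc (-N) N ×ˢ Finset.Icc (-N) N
  have hIcc : ∀ k : ℤ, |(k : ℝ)| ≤ R → k ∈ Finset.Icc (-N) N := fun k hk => by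
    rw [abs_le] at hk
    rw [Finset.mem_Icc, neg_le, Int.le_floor, Int.le_floor, Int.cast_neg]
    constructor <;> linarith
  have hmaps : ∀ i ∈ {i ∈ s | ‖f i‖ ≤ R}, f i ∈ B.image fun q => ((q.1 : ℝ), (q.2 : ℝ)) := by
    intro i hi
    rw [Finset.mem_filter] at hi
    obtain ⟨a, b, hab⟩ := hf i hi.1
    have hR' := hi.2
    simp only [hab, Prod.norm_def, Real.norm_eq_abs, max_le_iff] at hR'
    exact Finset.mem_image.2 ⟨(a, b), Finset.mem_product.2 ⟨hIcc a hR'.1, hIcc b hR'.2⟩, hab.symm⟩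
  have hcard := Finset.card_le_mul_card_image_of_maps_to hmaps m fun w _ =>
    (Finset.card_le_card (Finset.filter_subset_filter _ (Finset.filter_subset _ _))).trans (hm w)
  have hI : (#(Finset.Icc (-N) N) : ℝ) = 2 * N + 1 := by
    rw [← Int.cast_natCast, Int.card_Icc_of_le _ _ (by linarith [Int.floor_nonneg.2 hR])]
    push_cast
    ring
  calc (#{i ∈ s | ‖f i‖ ≤ R} : ℝ) ≤ m * #B := by
        exact_mod_cast hcard.trans (Nat.mul_le_mul_left m Finset.card_image_le)
    _ = m * (2 * N + 1) ^ 2 := by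
        rw [Finset.card_product, Nat.cast_mul, hI, sq]
    _ ≤ m * (2 * R + 1) ^ 2 := by gcongr; exact Int.floor_le R

lemma mul_card_sub_le_sum_norm (hf : ∀ i ∈ s, IsLatticePt (f i))
    (hm : ∀ w, #{i ∈ s | f i = w} ≤ m) {R : ℝ} (hR : 0 ≤ R) :
    R * (#s - m * (2 * R + 1) ^ 2) ≤ ∑ i ∈ s, ‖f i‖ := by
  classical
  have hsplit : (#s : ℝ) = #{i ∈ s | ‖f i‖ ≤ R} + #{i ∈ s | ¬‖f i‖ ≤ R} := by
    exact_mod_cast (Finset.card_filter_add_card_filter_not _).symm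
  calc R * (#s - m * (2 * R + 1) ^ 2) ≤ R * #{i ∈ s | ¬‖f i‖ ≤ R} := by
        gcongr
        linarith [card_filter_norm_le_le hf hm hR]
    _ = ∑ i ∈ s with ¬‖f i‖ ≤ R, R := by rw [Finset.sum_const, nsmul_eq_mul, mul_comm]
    _ ≤ ∑ i ∈ s with ¬‖f i‖ ≤ R, ‖f i‖ :=
        Finset.sum_le_sum fun i hi => (not_le.1 (Finset.mem_filter.1 hi).2).le
    _ ≤ ∑ i ∈ s, ‖f i‖ :=
        Finset.sum_le_sum_of_subset_of_nonneg (Finset.filter_subset _ _) fun _ _ _ => norm_nonneg _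

end LatticeCounting

lemma IsConvexPolygon.mul_sqrt_div_le_sum_norm_edge {n : ℕ} {z : ℕ → ℝ × ℝ}
    (hz : IsConvexPolygon n z) (hlat : ∀ i < n, IsLatticePt (z i)) (hn : 36 ≤ n) :
    n * √n / 12 ≤ ∑ i ∈ Finset.range n, ‖z ((i + 1) % n) - z i‖ := by
  set R := √n / 6
  have hR : 1 ≤ R := by
    rw [le_div_iff₀ (by norm_num), one_mul, Real.le_sqrt (by norm_num) (by positivity)]
    exact_mod_cast hn
  have hR2 : R ^ 2 = n / 36 := by rw [div_pow, Real.sq_sqrt (by positivity)]; norm_num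
  have hedge : ∀ i ∈ Finset.range n, IsLatticePt (z ((i + 1) % n) - z i) := fun i hi =>
    (hlat _ (Nat.mod_lt _ (by omega))).sub (hlat i (Finset.mem_range.1 hi))
  calc n * √n / 12 = R * (n - 18 * R ^ 2) := by rw [hR2]; ring
    _ ≤ R * (n - 2 * (2 * R + 1) ^ 2) := mul_le_mul_of_nonneg_left (by nlinarith) (by positivity)
    _ ≤ _ := by
        simpa using mul_card_sub_le_sum_norm hedge hz.card_filter_edge_eq_le_two (by positivity)

lemma cross_sub_sub_parabola (a b c : ℝ) :
    cross ((b, b ^ 2) - (a, a ^ 2)) ((c, c ^ 2) - (b, b ^ 2)) = (b - a) * (c - b) * (c - a) := by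
  simp only [cross, Prod.mk_sub_mk]
  ring

lemma exists_isConvexPolygon_isLatticePt {n : ℕ} (hn : 3 ≤ n) :
    ∃ z : ℕ → ℝ × ℝ, (∀ i < n, IsLatticePt (z i)) ∧ IsConvexPolygon n z := by
  refine ⟨fun i => ((i : ℝ), (i : ℝ) ^ 2), fun i _ => ⟨i, i ^ 2, by push_cast; rfl⟩,
    fun i _ => ?_, fun i hi => ?_⟩
  · refine notMem_convexHull_of_forall_lt
      ((2 * i : ℝ) • LinearMap.fst ℝ ℝ ℝ - LinearMap.snd ℝ ℝ ℝ) ?_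
    rintro _ ⟨j, ⟨-, hji⟩, rfl⟩
    have : (j : ℝ) - i ≠ 0 := sub_ne_zero.2 (by exact_mod_cast hji)
    simp only [LinearMap.sub_apply, LinearMap.smul_apply, LinearMap.fst_apply, LinearMap.snd_apply,
      smul_eq_mul]
    nlinarith [sq_pos_of_ne_zero this]
  · simp only [Nat.mod_eq_of_lt hi]
    rcases (by omega : i + 2 < n ∨ i + 2 = n ∨ i + 1 = n) with h | h | h
    · rw [Nat.mod_eq_of_lt h, Nat.mod_eq_of_lt (by omega), cross_sub_sub_parabola]
      push_cast
      norm_num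
    · have hin : (i : ℝ) + 2 = n := by exact_mod_cast h
      rw [h, Nat.mod_self, Nat.mod_eq_of_lt (by omega), cross_sub_sub_parabola]
      have : (3 : ℝ) ≤ n := by exact_mod_cast hn
      push_cast
      nlinarith
    · have hin : (i : ℝ) + 1 = n := by exact_mod_cast h
      rw [h, Nat.mod_self, show i + 2 = n + 1 by omega, Nat.add_mod_left,
        Nat.mod_eq_of_lt (by omega), cross_sub_sub_parabola]
      have : (3 : ℝ) ≤ n := by exact_mod_cast hn
      push_cast
      nlinarith

lemma normD_eq_gauge {D : Set (ℝ × ℝ)} (hD : (0 : ℝ × ℝ) ∈ D) : normD D = gauge D := by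
  ext x
  rw [normD, gauge_def]
  rcases eq_or_ne x 0 with rfl | hx
  · have : {t : ℝ | 0 ≤ t ∧ (0 : ℝ × ℝ) ∈ t • D} = Ici 0 :=
      Set.ext fun t => ⟨And.left, fun ht => ⟨ht, by simpa using smul_mem_smul_set (a := t) hD⟩⟩
    rw [this, csInf_Ici, ← gauge_def, gauge_zero]
  · congr 1
    ext t
    refine ⟨fun ⟨ht, hxt⟩ => ⟨ht.lt_of_ne ?_, hxt⟩, fun ⟨ht, hxt⟩ => ⟨le_of_lt ht, hxt⟩⟩
    rintro rfl
    exact hx (by simpa [zero_smul_set ⟨0, hD⟩] using hxt)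

lemma exists_pos_norm_div_le_normD {D : Set (ℝ × ℝ)} (hD : Bornology.IsBounded D)
    (hD0 : (0 : ℝ × ℝ) ∈ interior D) : ∃ M > 0, ∀ x, ‖x‖ / M ≤ normD D x := by
  obtain ⟨r, hr⟩ := (Metric.isBounded_iff_subset_closedBall 0).1 hD
  refine ⟨max r 1, by positivity, fun x => ?_⟩
  rw [normD_eq_gauge (interior_subset hD0)]
  exact le_gauge_of_subset_closedBall (absorbent_nhds_zero (mem_interior_iff_mem_nhds.1 hD0))
    (by positivity) (hr.trans (Metric.closedBall_subset_closedBall (le_max_left _ _)))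

theorem stmt7_general (D : Set (ℝ × ℝ)) (hDcp : IsCompact D)
    (hD0 : (0 : ℝ × ℝ) ∈ interior D) :
    ∃ c : ℝ, 0 < c ∧ ∃ n₀ : ℕ, ∀ n : ℕ, n₀ ≤ n → c * (n : ℝ) ^ ((3 : ℝ) / 2) ≤ Ln D n := by
  obtain ⟨M, hM, hnormD⟩ := exists_pos_norm_div_le_normD hDcp.isBounded hD0
  refine ⟨1 / (12 * M), by positivity, 36, fun n hn => ?_⟩
  obtain ⟨z₀, hz₀⟩ := exists_isConvexPolygon_isLatticePt (n := n) (by omega)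
  refine le_csInf ⟨_, z₀, hz₀.1, hz₀.2, rfl⟩ ?_
  rintro _ ⟨z, hlat, hz, rfl⟩
  have hpow : (n : ℝ) ^ ((3 : ℝ) / 2) = n * √n := by
    rw [show (3 : ℝ) / 2 = 1 + 1 / 2 by norm_num, Real.rpow_add (by positivity), Real.rpow_one,
      Real.sqrt_eq_rpow]
  calc 1 / (12 * M) * (n : ℝ) ^ ((3 : ℝ) / 2) = n * √n / 12 / M := by rw [hpow]; field_simp
    _ ≤ (∑ i ∈ Finset.range n, ‖z ((i + 1) % n) - z i‖) / M := by
        gcongr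
        exact hz.mul_sqrt_div_le_sum_norm_edge hlat hn
    _ ≤ perD D n z := by
        rw [perD, Finset.sum_div]
        exact Finset.sum_le_sum fun i _ => hnormD _

theorem stmt7 (D : Set (ℝ × ℝ)) (hDcp : IsCompact D) (hDcv : Convex ℝ D)
    (hD0 : (0 : ℝ × ℝ) ∈ interior D)
    (hArea : (MeasureTheory.volume D).toReal = 1) :
    ∃ c : ℝ, 0 < c ∧ ∃ n₀ : ℕ, ∀ n : ℕ, n₀ ≤ n → c * (n : ℝ) ^ ((3 : ℝ) / 2) ≤ Ln D n :=
  stmt7_general D hDcp hD0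
end

section
/- There exist constants C > 0 and n₀ such that for all n ≥ n₀, L_n ≤ C·n^{3/2}. -/
open Real Set
open scoped Pointwise

/-!
Sort the primitive vectors `(q, p)` with `0 < p, q ≤ K` by slope, concatenate them and close up
with the negative of their sum: the partial sums are the vertices of a convex lattice polygon,
because a functional `x ↦ cross x w` with `w` between two consecutive directions increases along
the chain up to one vertex and decreases after it. A pair in `(0, K]²` fails to be coprime only
if some `d ≥ 2` divides both entries, and `∑_{d ≥ 2} d⁻² ≤ 11/12`, so there are at least `K²/12`
such vectors and `K ≍ √n` yields an `n`-gon. As `‖·‖_D ≤ c ‖·‖`, its `D`-perimeter is at most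
`2 c n K = O(n^{3/2})`.
-/

open Finset

theorem normD_nonneg (D : Set (ℝ × ℝ)) (x : ℝ × ℝ) : 0 ≤ normD D x :=
  Real.sInf_nonneg fun _ ht => ht.1

theorem normD_le_gauge {D : Set (ℝ × ℝ)} (hD : Absorbent ℝ D) (x : ℝ × ℝ) :
    normD D x ≤ gauge D x :=
  csInf_le_csInf ⟨0, fun _ ht => ht.1⟩ hD.gauge_set_nonempty fun _ ht => ⟨ht.1.le, ht.2⟩

theorem exists_normD_le_mul_norm {D : Set (ℝ × ℝ)} (hD0 : (0 : ℝ × ℝ) ∈ interior D) :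
    ∃ c, 0 < c ∧ ∀ x, normD D x ≤ c * ‖x‖ := by
  have hD : D ∈ nhds 0 := mem_interior_iff_mem_nhds.mp hD0
  obtain ⟨ε, hε, hball⟩ := Metric.mem_nhds_iff.mp hD
  refine ⟨ε⁻¹, inv_pos.mpr hε, fun x => ?_⟩
  calc normD D x ≤ gauge D x := normD_le_gauge (absorbent_nhds_zero hD) x
    _ ≤ gauge (Metric.ball 0 ε) x := gauge_mono (absorbent_ball_zero hε) hball x
    _ = ε⁻¹ * ‖x‖ := by rw [gauge_ball hε.le, div_eq_inv_mul]

theorem Ln_le_perD {D : Set (ℝ × ℝ)} {n : ℕ} {z : ℕ → ℝ × ℝ}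
    (hz : ∀ i < n, IsLatticePt (z i)) (hconv : IsConvexPolygon n z) : Ln D n ≤ perD D n z :=
  csInf_le ⟨0, by rintro _ ⟨z', -, -, rfl⟩; exact sum_nonneg fun i _ => normD_nonneg D _⟩
    ⟨z, hz, hconv, rfl⟩

theorem IsLatticePt.add {x y : ℝ × ℝ} (hx : IsLatticePt x) (hy : IsLatticePt y) :
    IsLatticePt (x + y) := by
  obtain ⟨a, b, rfl⟩ := hx
  obtain ⟨a', b', rfl⟩ := hy
  exact ⟨a + a', b + b', by push_cast; rfl⟩

theorem isLatticePt_sum {s : Finset ℕ} {E : ℕ → ℝ × ℝ} (h : ∀ l ∈ s, IsLatticePt (E l)) :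
    IsLatticePt (∑ l ∈ s, E l) :=
  sum_induction E IsLatticePt (fun _ _ => IsLatticePt.add) ⟨0, 0, by ext <;> simp⟩ h

theorem cross_swap (u v : ℝ × ℝ) : cross u v = -cross v u := by
  simp only [cross]; ring

theorem cross_neg_left (u v : ℝ × ℝ) : cross (-u) v = -cross u v := by
  simp only [cross, Prod.fst_neg, Prod.snd_neg]; ring

theorem cross_neg_right (u v : ℝ × ℝ) : cross u (-v) = -cross u v := by
  simp only [cross, Prod.fst_neg, Prod.snd_neg]; ring

theorem cross_add_right (u v w : ℝ × ℝ) : cross u (v + w) = cross u v + cross u w := by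
  simp only [cross, Prod.fst_add, Prod.snd_add]; ring

def crossLinear (w : ℝ × ℝ) : ℝ × ℝ →ₗ[ℝ] ℝ where
  toFun x := cross x w
  map_add' x y := by simp only [cross, Prod.fst_add, Prod.snd_add]; ring
  map_smul' a x := by
    simp only [cross, Prod.smul_fst, Prod.smul_snd, smul_eq_mul, RingHom.id_apply]; ring

@[simp]
theorem crossLinear_apply (w x : ℝ × ℝ) : crossLinear w x = cross x w := rfl

theorem cross_sum_left (s : Finset ℕ) (E : ℕ → ℝ × ℝ) (w : ℝ × ℝ) :
    cross (∑ l ∈ s, E l) w = ∑ l ∈ s, cross (E l) w :=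
  map_sum (crossLinear w) E s

theorem cross_sum_right (s : Finset ℕ) (E : ℕ → ℝ × ℝ) (w : ℝ × ℝ) :
    cross w (∑ l ∈ s, E l) = ∑ l ∈ s, cross w (E l) := by
  rw [cross_swap, cross_sum_left, ← sum_neg_distrib]
  exact sum_congr rfl fun l _ => (cross_swap w (E l)).symm

section Polygon

theorem notMem_convexHull_of_lt {E : Type*} [AddCommGroup E] [Module ℝ E] (φ : E →ₗ[ℝ] ℝ)
    {s : Set E} {x : E} (h : ∀ y ∈ s, φ y < φ x) : x ∉ convexHull ℝ s :=
  fun hx => lt_irrefl (φ x) (convexHull_min h (convex_halfSpace_lt φ.isLinear (φ x)) hx)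

theorem sum_range_lt_of_sign_change {f : ℕ → ℝ} {v m j : ℕ} (hpos : ∀ l < v, 0 < f l)
    (hneg : ∀ l, v ≤ l → l < m → f l < 0) (hj : j ≤ m) (hjv : j ≠ v) :
    ∑ l ∈ range j, f l < ∑ l ∈ range v, f l := by
  rcases lt_or_gt_of_ne hjv with h | h
  · rw [← sum_range_add_sum_Ico f h.le, lt_add_iff_pos_right]
    exact sum_pos (fun l hl => hpos l (mem_Ico.1 hl).2) (nonempty_Ico.2 h)
  · rw [← sum_range_add_sum_Ico f h.le, add_lt_iff_neg_left]
    exact sum_neg (fun l hl => hneg l (mem_Ico.1 hl).1 ((mem_Ico.1 hl).2.trans_le hj))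
      (nonempty_Ico.2 h)

variable {m : ℕ} {E : ℕ → ℝ × ℝ}

theorem cross_nonneg_of_le (hcross : ∀ i j, i < j → j < m → 0 < cross (E i) (E j)) {i j : ℕ}
    (hij : i ≤ j) (hj : j < m) : 0 ≤ cross (E i) (E j) := by
  rcases hij.lt_or_eq with h | rfl
  · exact (hcross i j h hj).le
  · rw [cross, mul_comm, sub_self]

theorem exists_cross_sign_change (hpos : ∀ l < m, 0 < (E l).1)
    (hcross : ∀ i j, i < j → j < m → 0 < cross (E i) (E j)) {v : ℕ} (hv : v ≤ m) :
    ∃ w, (∀ l < v, 0 < cross (E l) w) ∧ ∀ l, v ≤ l → l < m → cross (E l) w < 0 := by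
  rcases Nat.eq_zero_or_pos v with rfl | hv0
  · refine ⟨(0, -1), fun l hl => absurd hl (Nat.not_lt_zero l), fun l _ hl => ?_⟩
    simpa [cross] using hpos l hl
  rcases hv.lt_or_eq with hvm | rfl
  · refine ⟨E (v - 1) + E v, fun l hl => ?_, fun l hl hlm => ?_⟩
    · rw [cross_add_right]
      exact add_pos_of_nonneg_of_pos (cross_nonneg_of_le hcross (by omega) (by omega))
        (hcross l v hl hvm)
    · rw [cross_add_right, cross_swap (E l) (E (v - 1)), cross_swap (E l) (E v)]
      have := hcross (v - 1) l (by omega) hlm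
      have := cross_nonneg_of_le hcross hl hlm
      linarith
  · refine ⟨(0, 1), fun l hl => ?_, fun l hl hlm => absurd hlm (by omega)⟩
    simpa [cross] using hpos l hl

def partialSums (E : ℕ → ℝ × ℝ) (k : ℕ) : ℝ × ℝ := ∑ l ∈ range k, E l

theorem isConvexPolygon_partialSums (hm : 2 ≤ m) (hpos : ∀ l < m, 0 < (E l).1)
    (hcross : ∀ i j, i < j → j < m → 0 < cross (E i) (E j)) :
    IsConvexPolygon (m + 1) (partialSums E) := by
  refine ⟨fun v hv => ?_, fun i hi => ?_⟩
  · obtain ⟨w, hw_pos, hw_neg⟩ := exists_cross_sign_change hpos hcross (Nat.lt_succ_iff.1 hv)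
    refine notMem_convexHull_of_lt (crossLinear w) ?_
    rintro _ ⟨j, ⟨hj, hjv⟩, rfl⟩
    simp only [crossLinear_apply, partialSums, cross_sum_left]
    exact sum_range_lt_of_sign_change hw_pos hw_neg (Nat.lt_succ_iff.1 hj) hjv
  have hedge : ∀ k < m, partialSums E (k + 1) - partialSums E k = E k := fun k _ =>
    sum_range_succ_sub_sum E
  have hclose : ∀ k, partialSums E 0 - partialSums E k = -partialSums E k := fun k => by
    simp [partialSums]
  -- Turn `i` is from edge `i` to edge `i + 1`, and edge `m` is the closing edge `-partialSums E m`.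
  rw [Nat.mod_eq_of_lt hi]
  rcases (by omega : i + 2 < m + 1 ∨ i + 2 = m + 1 ∨ i = m) with h | h | h
  · rw [Nat.mod_eq_of_lt (by omega), Nat.mod_eq_of_lt h, hedge i (by omega),
      hedge (i + 1) (by omega)]
    exact hcross i (i + 1) (by omega) (by omega)
  · rw [Nat.mod_eq_of_lt (by omega), h, Nat.mod_self, hedge i (by omega), hclose,
      cross_neg_right, cross_swap, neg_neg, partialSums, cross_sum_left]
    exact sum_pos' (fun l hl => cross_nonneg_of_le hcross (Nat.lt_succ_iff.1 (mem_range.1 hl))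
      (by omega)) ⟨0, mem_range.2 (by omega), hcross 0 i (by omega) (by omega)⟩
  · subst i
    have hmod : (m + 2) % (m + 1) = 1 := by
      rw [show m + 2 = m + 1 + 1 from rfl, Nat.add_mod_left, Nat.mod_eq_of_lt (by omega)]
    rw [Nat.mod_self, hmod, hclose, hedge 0 (by omega), cross_neg_left, cross_swap, neg_neg,
      partialSums, cross_sum_right]
    exact sum_pos' (fun l hl => cross_nonneg_of_le hcross (Nat.zero_le l) (by simpa using hl))
      ⟨m - 1, mem_range.2 (by omega), hcross 0 (m - 1) (by omega) (by omega)⟩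

theorem perD_partialSums (D : Set (ℝ × ℝ)) :
    perD D (m + 1) (partialSums E) =
      ∑ l ∈ range m, normD D (E l) + normD D (-partialSums E m) := by
  rw [perD, sum_range_succ, Nat.mod_self]
  congr 1
  · refine sum_congr rfl fun l hl => ?_
    rw [Nat.mod_eq_of_lt (Nat.succ_lt_succ (mem_range.1 hl)), partialSums, partialSums,
      sum_range_succ_sub_sum]
  · simp [partialSums]

theorem perD_partialSums_le {D : Set (ℝ × ℝ)} {c K : ℝ} (hc : 0 ≤ c)
    (hnormD : ∀ x, normD D x ≤ c * ‖x‖) (hK : ∀ l < m, ‖E l‖ ≤ K) :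
    perD D (m + 1) (partialSums E) ≤ 2 * c * m * K := by
  have hsum : ∑ l ∈ range m, ‖E l‖ ≤ m * K := by
    simpa using sum_le_sum fun l hl => hK l (mem_range.1 hl)
  rw [perD_partialSums]
  calc ∑ l ∈ range m, normD D (E l) + normD D (-partialSums E m)
      ≤ ∑ l ∈ range m, c * ‖E l‖ + c * ‖partialSums E m‖ := by
        gcongr with l
        · exact hnormD _
        · exact (hnormD _).trans_eq (by rw [norm_neg])
    _ ≤ c * (m * K) + c * (m * K) := by
        rw [← mul_sum]
        gcongr
        exact (norm_sum_le _ _).trans hsum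
    _ = 2 * c * m * K := by ring

end Polygon

theorem sum_Icc_two_inv_sq_le (K : ℕ) : ∑ d ∈ Finset.Icc 2 K, ((d : ℝ) ^ 2)⁻¹ ≤ 11 / 12 := by
  have hsub : Finset.Icc 2 K ⊆ insert 2 (Finset.Ioo 2 (K + 1)) := by
    intro d hd
    simp only [Finset.mem_Icc, Finset.mem_insert, Finset.mem_Ioo] at hd ⊢
    omega
  calc ∑ d ∈ Finset.Icc 2 K, ((d : ℝ) ^ 2)⁻¹
      ≤ ∑ d ∈ insert 2 (Finset.Ioo 2 (K + 1)), ((d : ℝ) ^ 2)⁻¹ :=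
        sum_le_sum_of_subset_of_nonneg hsub fun _ _ _ => by positivity
    _ = 4⁻¹ + ∑ d ∈ Finset.Ioo 2 (K + 1), ((d : ℝ) ^ 2)⁻¹ := by
        rw [sum_insert (by simp)]; norm_num
    _ ≤ 4⁻¹ + 2 / (2 + 1) := by gcongr; exact_mod_cast sum_Ioo_inv_sq_le 2 (K + 1)
    _ = 11 / 12 := by norm_num

theorem card_not_coprime_le (K : ℕ) :
    (#{p ∈ Finset.Ioc 0 K ×ˢ Finset.Ioc 0 K | ¬p.1.Coprime p.2} : ℝ) ≤ 11 / 12 * K ^ 2 := by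
  set B := Finset.Ioc 0 K ×ˢ Finset.Ioc 0 K
  have hsub : {p ∈ B | ¬p.1.Coprime p.2} ⊆
      (Finset.Icc 2 K).biUnion fun d => {p ∈ B | d ∣ p.1 ∧ d ∣ p.2} := by
    intro p hp
    simp only [B, mem_filter, mem_product, Finset.mem_Ioc] at hp
    have hgcd : p.1.gcd p.2 ≠ 0 := fun h => by have := Nat.eq_zero_of_gcd_eq_zero_left h; omega
    have hgcd_ne_one : p.1.gcd p.2 ≠ 1 := hp.2
    have hle : p.1.gcd p.2 ≤ p.1 := Nat.gcd_le_left _ hp.1.1.1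
    refine mem_biUnion.2 ⟨p.1.gcd p.2, Finset.mem_Icc.2 ⟨by omega, by omega⟩, ?_⟩
    exact mem_filter.2 ⟨by simpa [B] using hp.1, Nat.gcd_dvd_left _ _, Nat.gcd_dvd_right _ _⟩
  have hmultiples : ∀ d, #{p ∈ B | d ∣ p.1 ∧ d ∣ p.2} = (K / d) ^ 2 := fun d => by
    rw [filter_product, card_product, Nat.Ioc_filter_dvd_card_eq_div, sq]
  calc (#{p ∈ B | ¬p.1.Coprime p.2} : ℝ)
      ≤ ∑ d ∈ Finset.Icc 2 K, (((K / d : ℕ) : ℝ)) ^ 2 := by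
        exact_mod_cast ((Finset.card_le_card hsub).trans card_biUnion_le).trans_eq
          (sum_congr rfl fun d _ => hmultiples d)
    _ ≤ ∑ d ∈ Finset.Icc 2 K, (K : ℝ) ^ 2 * ((d : ℝ) ^ 2)⁻¹ := by
        gcongr with d
        rw [← inv_pow, ← mul_pow, ← div_eq_mul_inv]
        gcongr
        exact Nat.cast_div_le
    _ ≤ 11 / 12 * K ^ 2 := by
        rw [← mul_sum, mul_comm]
        gcongr
        exact sum_Icc_two_inv_sq_le K

theorem sq_le_twelve_mul_card_coprime (K : ℕ) :
    (K : ℝ) ^ 2 ≤ 12 * #{p ∈ Finset.Ioc 0 K ×ˢ Finset.Ioc 0 K | p.1.Coprime p.2} := by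
  have hsplit := card_filter_add_card_filter_not (s := Finset.Ioc 0 K ×ˢ Finset.Ioc 0 K)
    fun p => p.1.Coprime p.2
  rw [card_product, Nat.card_Ioc, Nat.sub_zero] at hsplit
  have hsplit' : (#{p ∈ Finset.Ioc 0 K ×ˢ Finset.Ioc 0 K | p.1.Coprime p.2} : ℝ) +
      #{p ∈ Finset.Ioc 0 K ×ˢ Finset.Ioc 0 K | ¬p.1.Coprime p.2} = K ^ 2 := by
    rw [sq]; exact_mod_cast hsplit
  linarith [card_not_coprime_le K]

theorem num_den_natCast_div_of_coprime {a b : ℕ} (hb : 0 < b) (h : a.Coprime b) :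
    ((a : ℚ) / b).num = a ∧ ((a : ℚ) / b).den = b := by
  have hb' : (0 : ℤ) < b := by exact_mod_cast hb
  have hnum := Rat.num_div_eq_of_coprime (a := a) hb' (by simpa using h)
  have hden := Rat.den_div_eq_of_coprime (a := a) hb' (by simpa using h)
  push_cast at hnum hden
  exact ⟨hnum, by exact_mod_cast hden⟩

theorem exists_rat_finset_num_den_le {m K : ℕ} (hmK : 12 * m ≤ K ^ 2) :
    ∃ R : Finset ℚ, m ≤ #R ∧ ∀ r ∈ R, 0 < r.num ∧ r.num ≤ K ∧ r.den ≤ K := by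
  set P := {p ∈ Finset.Ioc 0 K ×ˢ Finset.Ioc 0 K | p.1.Coprime p.2}
  have hP : ∀ p ∈ P, ((p.1 : ℚ) / p.2).num = p.1 ∧ ((p.1 : ℚ) / p.2).den = p.2 ∧
      0 < p.1 ∧ p.1 ≤ K ∧ p.2 ≤ K := fun p hp => by
    simp only [P, mem_filter, mem_product, Finset.mem_Ioc] at hp
    exact ⟨(num_den_natCast_div_of_coprime hp.1.2.1 hp.2).1,
      (num_den_natCast_div_of_coprime hp.1.2.1 hp.2).2, hp.1.1.1, hp.1.1.2, hp.1.2.2⟩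
  have hinj : Set.InjOn (fun p : ℕ × ℕ => (p.1 : ℚ) / p.2) P := fun p hp q hq hpq => Prod.ext
    (by exact_mod_cast (hP p hp).1.symm.trans ((congrArg Rat.num hpq).trans (hP q hq).1))
    ((hP p hp).2.1.symm.trans ((congrArg Rat.den hpq).trans (hP q hq).2.1))
  refine ⟨P.image fun p => (p.1 : ℚ) / p.2, ?_, ?_⟩
  · have := sq_le_twelve_mul_card_coprime K
    have : (12 * m : ℝ) ≤ K ^ 2 := by exact_mod_cast hmK
    rw [card_image_of_injOn hinj]
    exact_mod_cast (by linarith : (m : ℝ) ≤ #P)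
  · simp only [Finset.forall_mem_image]
    intro p hp
    obtain ⟨hnum, hden, h0, h1, h2⟩ := hP p hp
    rw [hnum, hden]
    exact ⟨by exact_mod_cast h0, by exact_mod_cast h1, h2⟩

theorem cross_den_num_pos_of_lt {r s : ℚ} (h : r < s) :
    0 < cross ((r.den : ℝ), (r.num : ℝ)) ((s.den : ℝ), (s.num : ℝ)) := by
  have : (r.num : ℝ) * s.den < s.num * r.den := by exact_mod_cast (Rat.lt_iff r s).1 h
  simp only [cross]
  linarith

theorem exists_lattice_directions {m K : ℕ} (hmK : 12 * m ≤ K ^ 2) :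
    ∃ E : ℕ → ℝ × ℝ, (∀ l < m, IsLatticePt (E l) ∧ 0 < (E l).1 ∧ ‖E l‖ ≤ K) ∧
      ∀ i j, i < j → j < m → 0 < cross (E i) (E j) := by
  obtain ⟨R, hRcard, hR⟩ := exists_rat_finset_num_den_le hmK
  obtain ⟨T, hTR, hT⟩ := exists_subset_card_eq hRcard
  let s : ℕ → ℚ := fun l => if hl : l < m then T.orderEmbOfFin hT ⟨l, hl⟩ else 0
  have hsR : ∀ l < m, s l ∈ R := fun l hl => by
    simp only [s, dif_pos hl]
    exact hTR (orderEmbOfFin_mem T hT _)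
  refine ⟨fun l => ((s l).den, (s l).num), fun l hl => ?_, fun i j hij hj => ?_⟩
  · obtain ⟨h0, h1, h2⟩ := hR _ (hsR l hl)
    refine ⟨⟨(s l).den, (s l).num, by simp⟩, by simp [Rat.den_pos], ?_⟩
    rw [Prod.norm_def]
    dsimp only
    rw [Real.norm_eq_abs, Real.norm_eq_abs, abs_of_nonneg (by positivity),
      abs_of_pos (by exact_mod_cast h0)]
    exact max_le (by exact_mod_cast h2) (by exact_mod_cast h1)
  · apply cross_den_num_pos_of_lt
    simp only [s, dif_pos hj, dif_pos (hij.trans hj)]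
    exact (T.orderEmbOfFin hT).strictMono (Fin.mk_lt_mk.2 hij)

theorem stmt8_general (D : Set (ℝ × ℝ)) (hD0 : (0 : ℝ × ℝ) ∈ interior D) :
    ∃ C : ℝ, 0 < C ∧ ∃ n₀ : ℕ, ∀ n : ℕ, n₀ ≤ n → Ln D n ≤ C * (n : ℝ) ^ ((3 : ℝ) / 2) := by
  obtain ⟨c, hc, hnormD⟩ := exists_normD_le_mul_norm hD0
  refine ⟨16 * c, by positivity, 3, fun n hn => ?_⟩
  obtain ⟨m, rfl⟩ : ∃ m, n = m + 1 := ⟨n - 1, by omega⟩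
  set s := Nat.sqrt (m + 1)
  obtain ⟨E, hE, hcross⟩ := exists_lattice_directions (m := m) (K := 4 * (s + 1)) (by
    have := Nat.lt_succ_sqrt' (m + 1)
    nlinarith)
  have hs : (s : ℝ) ≤ √(m + 1 : ℝ) :=
    Real.le_sqrt_of_sq_le (by exact_mod_cast Nat.sqrt_le' (m + 1))
  have hs1 : (1 : ℝ) ≤ s := by exact_mod_cast Nat.sqrt_pos.2 (Nat.succ_pos m)
  have hpow : ((m + 1 : ℕ) : ℝ) ^ ((3 : ℝ) / 2) = (m + 1 : ℝ) * √(m + 1 : ℝ) := by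
    rw [show (3 : ℝ) / 2 = 1 + 1 / 2 by norm_num, Real.rpow_add (by positivity), Real.rpow_one,
      ← Real.sqrt_eq_rpow]
    push_cast; rfl
  calc Ln D (m + 1) ≤ perD D (m + 1) (partialSums E) :=
        Ln_le_perD (fun i hi => isLatticePt_sum fun l hl => (hE l ((mem_range.1 hl).trans_le
          (Nat.lt_succ_iff.1 hi))).1)
          (isConvexPolygon_partialSums (by omega) (fun l hl => (hE l hl).2.1) hcross)
    _ ≤ 2 * c * m * (4 * (s + 1) : ℕ) :=
        perD_partialSums_le hc.le hnormD fun l hl => (hE l hl).2.2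
    _ ≤ 16 * c * ((m + 1 : ℕ) : ℝ) ^ ((3 : ℝ) / 2) := by
        rw [hpow]
        push_cast
        have : (m : ℝ) * (s + 1) ≤ (m + 1) * (2 * √(m + 1 : ℝ)) := by gcongr <;> linarith
        nlinarith

theorem stmt8 (D : Set (ℝ × ℝ)) (hDcp : IsCompact D) (hDcv : Convex ℝ D)
    (hD0 : (0 : ℝ × ℝ) ∈ interior D)
    (hArea : (MeasureTheory.volume D).toReal = 1) :
    ∃ C : ℝ, 0 < C ∧ ∃ n₀ : ℕ, ∀ n : ℕ, n₀ ≤ n → Ln D n ≤ C * (n : ℝ) ^ ((3 : ℝ) / 2) :=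
  stmt8_general D hD0
end

section
/- Let M_n(w) be the minimum of Σ_{v∈S} |v| over all sets S of n distinct nonzero lattice points contained in a strip of width w centred at the origin (|·| the Euclidean norm). There is a constant c > 0 such that for every γ ∈ (0, 1/2] and all sufficiently large n: if w ≤ γ·n^{1/2} then M_n(w) ≥ c·n^{3/2}/γ. -/
open Real Set

/-- The Euclidean norm on the plane `ℝ × ℝ`. -/
noncomputable def eN (p : ℝ × ℝ) : ℝ := Real.sqrt (p.1 ^ 2 + p.2 ^ 2)

def toR2 (p : ℤ × ℤ) : ℝ × ℝ := ((p.1 : ℝ), (p.2 : ℝ))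

/-- `S` lies in a strip of width `w` centred at the origin, i.e. within Euclidean
distance `w/2` of some line through the origin. -/
def InStrip (S : Finset (ℤ × ℤ)) (w : ℝ) : Prop :=
  ∃ u : ℝ × ℝ, eN u = 1 ∧ ∀ p ∈ S, |cross u (toR2 p)| ≤ w / 2

/-!
Among the points of a strip of width `w`, at most `O((R + 1)(w + 1))` lattice points have norm
at most `R`: in the coordinates along and across the strip (a rotation, hence an isometry)
distinct lattice points lie in distinct half-unit boxes, whose diameter is `1 / √2 < 1`.
Taking `R ≍ √n / γ`, at least half of the `n` points have norm `≥ R`, so the sum of norms is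
`≳ n · √n / γ`.
-/

def dot (u v : ℝ × ℝ) : ℝ := u.1 * v.1 + u.2 * v.2

lemma eN_sq (p : ℝ × ℝ) : eN p ^ 2 = p.1 ^ 2 + p.2 ^ 2 := Real.sq_sqrt (by positivity)

lemma dot_sq_add_cross_sq (u v : ℝ × ℝ) :
    dot u v ^ 2 + cross u v ^ 2 = (u.1 ^ 2 + u.2 ^ 2) * (v.1 ^ 2 + v.2 ^ 2) := by
  unfold dot cross; ring

lemma abs_dot_le_eN {u : ℝ × ℝ} (hu : eN u = 1) (v : ℝ × ℝ) : |dot u v| ≤ eN v := by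
  rw [← sqrt_sq_eq_abs, eN]
  refine Real.sqrt_le_sqrt ?_
  have := dot_sq_add_cross_sq u v
  rw [← eN_sq u, hu] at this
  nlinarith [sq_nonneg (cross u v)]

lemma one_le_sq_sub_add_sq_sub_of_ne {p q : ℤ × ℤ} (h : p ≠ q) :
    1 ≤ ((p.1 : ℝ) - q.1) ^ 2 + ((p.2 : ℝ) - q.2) ^ 2 := by
  have hpos : 0 < (p.1 - q.1) ^ 2 + (p.2 - q.2) ^ 2 := by
    by_contra hle
    have h0 : (p.1 - q.1) ^ 2 + (p.2 - q.2) ^ 2 = 0 := le_antisymm (not_lt.mp hle) (by positivity)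
    rw [add_eq_zero_iff_of_nonneg (sq_nonneg _) (sq_nonneg _), sq_eq_zero_iff, sq_eq_zero_iff,
      sub_eq_zero, sub_eq_zero] at h0
    exact h (Prod.ext h0.1 h0.2)
  exact_mod_cast hpos

lemma eq_of_floor_two_mul_eq {u : ℝ × ℝ} (hu : eN u = 1) {p q : ℤ × ℤ}
    (hd : ⌊2 * dot u (toR2 p)⌋ = ⌊2 * dot u (toR2 q)⌋)
    (hc : ⌊2 * cross u (toR2 p)⌋ = ⌊2 * cross u (toR2 q)⌋) : p = q := by
  by_contra hne
  have hu2 : u.1 ^ 2 + u.2 ^ 2 = 1 := by rw [← eN_sq, hu, one_pow]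
  have hsep := one_le_sq_sub_add_sq_sub_of_ne hne
  have hd' := abs_lt.mp (Int.abs_sub_lt_one_of_floor_eq_floor hd)
  have hc' := abs_lt.mp (Int.abs_sub_lt_one_of_floor_eq_floor hc)
  have hrot : (dot u (toR2 p) - dot u (toR2 q)) ^ 2 + (cross u (toR2 p) - cross u (toR2 q)) ^ 2
      = ((p.1 : ℝ) - q.1) ^ 2 + ((p.2 : ℝ) - q.2) ^ 2 := by
    simp only [dot, cross, toR2]
    linear_combination (((p.1 : ℝ) - q.1) ^ 2 + ((p.2 : ℝ) - q.2) ^ 2) * hu2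
  nlinarith

lemma card_Icc_floor_neg_floor_le {x : ℝ} (hx : 0 ≤ x) :
    ((Finset.Icc ⌊-x⌋ ⌊x⌋).card : ℝ) ≤ 2 * (x + 1) := by
  have hnonneg : 0 ≤ ⌊x⌋ + 1 - ⌊-x⌋ := by
    have := Int.floor_le_floor (neg_le_self hx)
    omega
  rw [Int.card_Icc, ← Int.cast_natCast, Int.toNat_of_nonneg hnonneg, Int.floor_neg]
  push_cast
  linarith [Int.floor_le x, Int.ceil_lt_add_one x]

lemma card_le_of_abs_dot_le_of_abs_cross_le {u : ℝ × ℝ} (hu : eN u = 1) {S : Finset (ℤ × ℤ)}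
    {R w : ℝ} (hR : 0 ≤ R) (hw : 0 ≤ w) (hdot : ∀ p ∈ S, |dot u (toR2 p)| ≤ R)
    (hcross : ∀ p ∈ S, |cross u (toR2 p)| ≤ w / 2) :
    (S.card : ℝ) ≤ 8 * (R + 1) * (w + 1) := by
  let cell : ℤ × ℤ → ℤ × ℤ := fun p => (⌊2 * dot u (toR2 p)⌋, ⌊2 * cross u (toR2 p)⌋)
  have hmaps : Set.MapsTo cell S
      ((Finset.Icc ⌊-(2 * R)⌋ ⌊2 * R⌋ ×ˢ Finset.Icc ⌊-w⌋ ⌊w⌋ : Finset (ℤ × ℤ)) : Set (ℤ × ℤ)) := by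
    intro p hp
    have hd := abs_le.mp (hdot p hp)
    have hc := abs_le.mp (hcross p hp)
    simp only [cell, Finset.coe_product, Set.mem_prod, Finset.coe_Icc, Set.mem_Icc]
    refine ⟨⟨?_, ?_⟩, ?_, ?_⟩ <;> exact Int.floor_le_floor (by linarith)
  have hinj : Set.InjOn cell S := fun p _ q _ hpq =>
    eq_of_floor_two_mul_eq hu (Prod.ext_iff.mp hpq).1 (Prod.ext_iff.mp hpq).2
  have hcard := Finset.card_le_card_of_injOn cell hmaps hinj
  rw [Finset.card_product] at hcard
  calc (S.card : ℝ) ≤ (Finset.Icc ⌊-(2 * R)⌋ ⌊2 * R⌋).card * (Finset.Icc ⌊-w⌋ ⌊w⌋).card := by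
        exact_mod_cast hcard
    _ ≤ (2 * (2 * R + 1)) * (2 * (w + 1)) := by
        gcongr
        · exact card_Icc_floor_neg_floor_le (by positivity)
        · exact card_Icc_floor_neg_floor_le hw
    _ ≤ 8 * (R + 1) * (w + 1) := by nlinarith

lemma card_sub_mul_le_sum_eN {u : ℝ × ℝ} (hu : eN u = 1) {S : Finset (ℤ × ℤ)} {R w : ℝ}
    (hR : 0 ≤ R) (hw : 0 ≤ w) (hcross : ∀ p ∈ S, |cross u (toR2 p)| ≤ w / 2) :
    (S.card - 8 * (R + 1) * (w + 1)) * R ≤ ∑ p ∈ S, eN (toR2 p) := by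
  set near := S.filter (fun p => eN (toR2 p) ≤ R)
  set far := S.filter (fun p => ¬ eN (toR2 p) ≤ R)
  have hnear : (near.card : ℝ) ≤ 8 * (R + 1) * (w + 1) :=
    card_le_of_abs_dot_le_of_abs_cross_le hu hR hw
      (fun p hp => (abs_dot_le_eN hu _).trans (Finset.mem_filter.mp hp).2)
      (fun p hp => hcross p (Finset.mem_of_mem_filter p hp))
  have hsplit : (near.card : ℝ) + far.card = S.card := by
    exact_mod_cast Finset.card_filter_add_card_filter_not _
  have hfar : far.card * R ≤ ∑ p ∈ far, eN (toR2 p) := by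
    simpa [nsmul_eq_mul] using Finset.card_nsmul_le_sum far (fun p => eN (toR2 p)) R
      (fun p hp => (not_le.mp (Finset.mem_filter.mp hp).2).le)
  calc (S.card - 8 * (R + 1) * (w + 1)) * R ≤ far.card * R := by gcongr; linarith
    _ ≤ ∑ p ∈ far, eN (toR2 p) := hfar
    _ ≤ ∑ p ∈ S, eN (toR2 p) :=
        Finset.sum_le_sum_of_subset_of_nonneg (Finset.filter_subset _ _)
          (fun _ _ _ => Real.sqrt_nonneg _)

theorem stmt10 :
    ∃ c : ℝ, 0 < c ∧ ∀ γ : ℝ, 0 < γ → γ ≤ 1 / 2 → ∃ n₀ : ℕ, ∀ n : ℕ, n₀ ≤ n →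
      ∀ w : ℝ, ∀ S : Finset (ℤ × ℤ), S.card = n → (0 : ℤ × ℤ) ∉ S → InStrip S w →
        w ≤ γ * (n : ℝ) ^ ((1 : ℝ) / 2) →
        c * (n : ℝ) ^ ((3 : ℝ) / 2) / γ ≤ ∑ p ∈ S, eN (toR2 p) := by
  refine ⟨1 / 128, by norm_num, fun γ hγ hγ2 => ⟨1024 + ⌈γ⁻¹ ^ 2⌉₊, ?_⟩⟩
  rintro n hn w S rfl - ⟨u, hu, hcross⟩ hw
  set s := √(S.card : ℝ)
  have hss : s ^ 2 = S.card := Real.sq_sqrt (Nat.cast_nonneg _)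
  have hcard : (1024 : ℝ) + γ⁻¹ ^ 2 ≤ S.card := by
    have : (1024 : ℝ) + ⌈γ⁻¹ ^ 2⌉₊ ≤ S.card := by exact_mod_cast hn
    linarith [Nat.le_ceil (γ⁻¹ ^ 2)]
  have h1024 : (1024 : ℝ) ≤ S.card := by linarith [sq_nonneg γ⁻¹]
  have hs32 : 32 ≤ s :=
    (Real.le_sqrt (by norm_num) (Nat.cast_nonneg _)).mpr (by norm_num; linarith)
  have hγs : 1 ≤ γ * s := by
    have : γ⁻¹ ≤ s := (Real.le_sqrt (by positivity) (Nat.cast_nonneg _)).mpr (by linarith)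
    simpa [hγ.ne'] using mul_le_mul_of_nonneg_left this hγ.le
  rw [← Real.sqrt_eq_rpow] at hw
  rw [show (3 : ℝ) / 2 = 1 + 1 / 2 by norm_num, Real.rpow_add (h1024.trans_lt' (by norm_num)),
    Real.rpow_one, ← Real.sqrt_eq_rpow]
  obtain ⟨p, hp⟩ : S.Nonempty := Finset.card_pos.mp (by omega)
  have hw0 : 0 ≤ w := by linarith [abs_nonneg (cross u (toR2 p)), hcross p hp]
  set R := s / (64 * γ)
  have hR : 1 ≤ R := by rw [le_div_iff₀ (by positivity)]; linarith
  have hnear : 8 * (R + 1) * (w + 1) ≤ S.card / 2 :=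
    calc 8 * (R + 1) * (w + 1) ≤ 8 * (2 * R) * (2 * γ * s) := by gcongr <;> linarith
      _ = S.card / 2 := by simp only [R]; rw [← hss]; field_simp; ring
  calc 1 / 128 * (S.card * s) / γ = (S.card - S.card / 2) * R := by
        simp only [R]; rw [← hss]; field_simp; ring
    _ ≤ (S.card - 8 * (R + 1) * (w + 1)) * R := by gcongr
    _ ≤ ∑ p ∈ S, eN (toR2 p) := card_sub_mul_le_sum_eN hu (by linarith) hw0 hcross
end

section
/- Let r₀ be a positive continuous function on [0,2π] with r₀(0) = r₀(2π) such that (1/2)∫₀^{2π} r₀²(t) dt = 1, ∫₀^{2π} r₀³(t) cos t dt = 0 and ∫₀^{2π} r₀³(t) sin t dt = 0. Then for every positive continuous function r on [0,2π] with (1/2)∫₀^{2π} r²(t) dt = 1, one has ∫₀^{2π} r³(t)/r₀(t) dt ≥ ∫₀^{2π} r₀²(t) dt = 2, with equality if and only if r = r₀. -/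
/-!
Pointwise, for `x ≥ 0` and `y > 0`,
`x³ / y = (3/2) x² - (1/2) y² + (x - y)² (x + y/2) / y`, and the last term is nonnegative and
vanishes only at `x = y`. Integrating with `x = r t`, `y = r₀ t`, the quadratic terms cancel because
`r` and `r₀` bound the same area, so `∫ r³/r₀ - ∫ r₀²` is the integral of a nonnegative continuous
function, which is zero exactly when `r = r₀`.
-/

open Real Set MeasureTheory intervalIntegral

section Pointwise

variable {x y : ℝ}

lemma cube_div_eq (x : ℝ) (hy : y ≠ 0) :
    x ^ 3 / y = 3 / 2 * x ^ 2 - 1 / 2 * y ^ 2 + (x - y) ^ 2 * (x + y / 2) / y := by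
  field_simp
  ring

lemma sq_sub_mul_add_half_div_nonneg (hx : 0 ≤ x) (hy : 0 < y) :
    0 ≤ (x - y) ^ 2 * (x + y / 2) / y := by
  positivity

lemma sq_sub_mul_add_half_div_eq_zero_iff (hx : 0 ≤ x) (hy : 0 < y) :
    (x - y) ^ 2 * (x + y / 2) / y = 0 ↔ x = y := by
  have : x + y / 2 ≠ 0 := by positivity
  simp [hy.ne', this, sub_eq_zero]

end Pointwise

lemma intervalIntegral.integral_eq_zero_iff_of_continuousOn_of_nonneg {f : ℝ → ℝ} {a b : ℝ}
    (hab : a < b) (hfc : ContinuousOn f (Icc a b)) (hf : ∀ x ∈ Icc a b, 0 ≤ f x) :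
    ∫ x in a..b, f x = 0 ↔ ∀ x ∈ Icc a b, f x = 0 := by
  constructor
  · intro h
    by_contra! ⟨c, hc, hne⟩
    have := integral_pos hab hfc (fun x hx => hf x (Ioc_subset_Icc_self hx))
      ⟨c, hc, (hf c hc).lt_of_ne' hne⟩
    linarith
  · intro h
    rw [integral_congr fun x hx => h x (uIcc_of_le hab.le ▸ hx)]
    simp

section Integral

variable {r₀ r : ℝ → ℝ} {a b : ℝ}

lemma integral_cube_div_eq (hab : a ≤ b)
    (hr₀c : ContinuousOn r₀ (Icc a b)) (hr₀pos : ∀ t ∈ Icc a b, 0 < r₀ t)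
    (hrc : ContinuousOn r (Icc a b)) (harea : ∫ t in a..b, r t ^ 2 = ∫ t in a..b, r₀ t ^ 2) :
    ∫ t in a..b, r t ^ 3 / r₀ t =
      (∫ t in a..b, r₀ t ^ 2) + ∫ t in a..b, (r t - r₀ t) ^ 2 * (r t + r₀ t / 2) / r₀ t := by
  have hr₀ne : ∀ t ∈ Icc a b, r₀ t ≠ 0 := fun t ht => (hr₀pos t ht).ne'
  have hrint : IntervalIntegrable (fun t => r t ^ 2) volume a b :=
    (hrc.pow 2).intervalIntegrable_of_Icc hab
  have hr₀int : IntervalIntegrable (fun t => r₀ t ^ 2) volume a b :=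
    (hr₀c.pow 2).intervalIntegrable_of_Icc hab
  have hdefect : IntervalIntegrable (fun t => (r t - r₀ t) ^ 2 * (r t + r₀ t / 2) / r₀ t)
      volume a b :=
    (ContinuousOn.div (by fun_prop) hr₀c hr₀ne).intervalIntegrable_of_Icc hab
  rw [integral_congr fun t ht => cube_div_eq (r t) (hr₀ne t (uIcc_of_le hab ▸ ht)),
    integral_add ((hrint.const_mul _).sub (hr₀int.const_mul _)) hdefect,
    integral_sub (hrint.const_mul _) (hr₀int.const_mul _),
    intervalIntegral.integral_const_mul, intervalIntegral.integral_const_mul, harea]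
  ring

theorem integral_sq_le_integral_cube_div (hab : a < b)
    (hr₀c : ContinuousOn r₀ (Icc a b)) (hr₀pos : ∀ t ∈ Icc a b, 0 < r₀ t)
    (hrc : ContinuousOn r (Icc a b)) (hrnonneg : ∀ t ∈ Icc a b, 0 ≤ r t)
    (harea : ∫ t in a..b, r t ^ 2 = ∫ t in a..b, r₀ t ^ 2) :
    ∫ t in a..b, r₀ t ^ 2 ≤ ∫ t in a..b, r t ^ 3 / r₀ t ∧
      (∫ t in a..b, r t ^ 3 / r₀ t = ∫ t in a..b, r₀ t ^ 2 ↔ ∀ t ∈ Icc a b, r t = r₀ t) := by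
  have hdefect_nonneg : ∀ t ∈ Icc a b, 0 ≤ (r t - r₀ t) ^ 2 * (r t + r₀ t / 2) / r₀ t :=
    fun t ht => sq_sub_mul_add_half_div_nonneg (hrnonneg t ht) (hr₀pos t ht)
  have hdefect_c : ContinuousOn (fun t => (r t - r₀ t) ^ 2 * (r t + r₀ t / 2) / r₀ t) (Icc a b) :=
    ContinuousOn.div (by fun_prop) hr₀c fun t ht => (hr₀pos t ht).ne'
  rw [integral_cube_div_eq hab.le hr₀c hr₀pos hrc harea]
  refine ⟨le_add_of_nonneg_right (integral_nonneg hab.le hdefect_nonneg), ?_⟩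
  rw [add_eq_left, integral_eq_zero_iff_of_continuousOn_of_nonneg hab hdefect_c hdefect_nonneg]
  exact forall₂_congr fun t ht =>
    sq_sub_mul_add_half_div_eq_zero_iff (hrnonneg t ht) (hr₀pos t ht)

end Integral

theorem stmt11_general (r₀ r : ℝ → ℝ)
    (hr₀c : ContinuousOn r₀ (Icc 0 (2 * π))) (hr₀pos : ∀ t ∈ Icc (0 : ℝ) (2 * π), 0 < r₀ t)
    (harea₀ : (1 / 2) * (∫ t in (0 : ℝ)..(2 * π), r₀ t ^ 2) = 1)
    (hrc : ContinuousOn r (Icc 0 (2 * π))) (hrpos : ∀ t ∈ Icc (0 : ℝ) (2 * π), 0 < r t)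
    (harea : (1 / 2) * (∫ t in (0 : ℝ)..(2 * π), r t ^ 2) = 1) :
    2 ≤ (∫ t in (0 : ℝ)..(2 * π), r t ^ 3 / r₀ t) ∧
    ((∫ t in (0 : ℝ)..(2 * π), r t ^ 3 / r₀ t) = 2 ↔ ∀ t ∈ Icc (0 : ℝ) (2 * π), r t = r₀ t) := by
  have hr₀two : ∫ t in (0 : ℝ)..(2 * π), r₀ t ^ 2 = 2 := by linarith
  have hrtwo : ∫ t in (0 : ℝ)..(2 * π), r t ^ 2 = 2 := by linarith
  have := integral_sq_le_integral_cube_div (by positivity) hr₀c hr₀pos hrc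
    (fun t ht => (hrpos t ht).le) (hrtwo.trans hr₀two.symm)
  rwa [hr₀two] at this

theorem stmt11 (r₀ r : ℝ → ℝ)
    (hr₀c : ContinuousOn r₀ (Icc 0 (2 * π))) (hr₀pos : ∀ t ∈ Icc (0 : ℝ) (2 * π), 0 < r₀ t)
    (hper : r₀ 0 = r₀ (2 * π))
    (harea₀ : (1 / 2) * (∫ t in (0 : ℝ)..(2 * π), r₀ t ^ 2) = 1)
    (hcos : (∫ t in (0 : ℝ)..(2 * π), r₀ t ^ 3 * Real.cos t) = 0)
    (hsin : (∫ t in (0 : ℝ)..(2 * π), r₀ t ^ 3 * Real.sin t) = 0)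
    (hrc : ContinuousOn r (Icc 0 (2 * π))) (hrpos : ∀ t ∈ Icc (0 : ℝ) (2 * π), 0 < r t)
    (harea : (1 / 2) * (∫ t in (0 : ℝ)..(2 * π), r t ^ 2) = 1) :
    2 ≤ (∫ t in (0 : ℝ)..(2 * π), r t ^ 3 / r₀ t) ∧
    ((∫ t in (0 : ℝ)..(2 * π), r t ^ 3 / r₀ t) = 2 ↔ ∀ t ∈ Icc (0 : ℝ) (2 * π), r t = r₀ t) :=
  stmt11_general r₀ r hr₀c hr₀pos harea₀ hrc hrpos harea
end
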